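/- arXiv:1808.00363 — 3 statements merged into one kernel-verified Lean document; each statement's English description precedes it below -/
import Mathlib

section
/- Under the same assumptions, ∂A_r/∂u at u = 1 equals x·F'(x)·F_r(x)/F(x) as formal power series (where F(x)/x has nonzero constant term, so the quotient is well-defined). -/
open PowerSeries

/-- composition `Φ ∘ g` of formal power series (intended for `g` with zero constant
term, in which case the coefficient of `xⁿ` is the finite sum
`Σ_{k ≤ n} [tᵏ]Φ · [xⁿ](gᵏ)`). -/
noncomputable def pscomp {R : Type*} [CommSemiring R] (Φ g : PowerSeries R) : PowerSeries R :=
  PowerSeries.mk fun n =>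
    ∑ k ∈ Finset.range (n + 1), (PowerSeries.coeff k Φ) * PowerSeries.coeff n (g ^ k)

/-- the coefficientwise partial derivative `∂/∂u` of a power series in `x` with
polynomial coefficients in `u`, evaluated at `u = 1` -/
noncomputable def duAtOne (A : PowerSeries (Polynomial ℝ)) : PowerSeries ℝ :=
  PowerSeries.mk fun n =>
    Polynomial.eval 1 (Polynomial.derivative (PowerSeries.coeff n A))

/-! Differentiating the bivariate equation in `u` at `u = 1`, where `A(x, 1) = F(x)` and the
`(u - 1)·F_r(xu)` term contributes just `F_r(x)`, gives `∂ᵤA · (1 - x·Φ'(F)) = F_r`.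
Differentiating `F = x·Φ(F)` in `x` gives `x·F' · (1 - x·Φ'(F)) = F`. Cross-multiplying the
two identities yields the claim without dividing by `1 - x·Φ'(F)` or by `F`. -/

section CommSemiring

variable {R : Type*} [CommSemiring R]

theorem PowerSeries.coeff_pow_eq_zero_of_lt {g : R⟦X⟧} (hg : constantCoeff g = 0) {n k : ℕ}
    (h : n < k) : coeff n (g ^ k) = 0 :=
  coeff_of_lt_order n <| (Nat.cast_lt.2 h).trans_le (le_order_pow_of_constantCoeff_eq_zero k hg)

theorem coeff_pscomp_of_le (Φ : R⟦X⟧) {g : R⟦X⟧} (hg : constantCoeff g = 0) {m n : ℕ}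
    (h : m ≤ n) :
    coeff m (pscomp Φ g) = ∑ k ∈ Finset.range (n + 1), coeff k Φ * coeff m (g ^ k) := by
  rw [pscomp, coeff_mk]
  refine Finset.sum_subset (Finset.range_subset_range.2 (by omega)) fun k _ hk => ?_
  rw [coeff_pow_eq_zero_of_lt hg (by simpa using hk), mul_zero]

theorem coeff_pscomp_mul (Φ : R⟦X⟧) {g : R⟦X⟧} (hg : constantCoeff g = 0) (h : R⟦X⟧)
    (n : ℕ) : coeff n (pscomp Φ g * h) =
      ∑ k ∈ Finset.range (n + 1), coeff k Φ * coeff n (g ^ k * h) := by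
  simp_rw [coeff_mul, Finset.mul_sum]
  rw [Finset.sum_comm]
  refine Finset.sum_congr rfl fun p hp => ?_
  rw [coeff_pscomp_of_le Φ hg (Finset.HasAntidiagonal.antidiagonal.fst_le hp), Finset.sum_mul]
  exact Finset.sum_congr rfl fun k _ => mul_assoc _ _ _

theorem map_pscomp {S : Type*} [CommSemiring S] (f : R →+* S) (Φ g : R⟦X⟧) :
    map f (pscomp Φ g) = pscomp (map f Φ) (map f g) := by
  ext n
  simp [pscomp, coeff_map, ← map_pow]

end CommSemiring

section CommRing

variable {R : Type*} [CommRing R]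

theorem pscomp_eq_subst (Φ : R⟦X⟧) {g : R⟦X⟧} (hg : constantCoeff g = 0) :
    pscomp Φ g = Φ.subst g := by
  ext n
  rw [coeff_subst' (HasSubst.of_constantCoeff_zero' hg), pscomp, coeff_mk,
    finsum_eq_sum_of_support_subset _ (s := Finset.range (n + 1))]
  · simp [smul_eq_mul]
  · intro k hk
    by_contra hkn
    exact hk (by simp [coeff_pow_eq_zero_of_lt hg (by simpa using hkn)])

theorem derivative_pscomp (Φ : R⟦X⟧) {g : R⟦X⟧} (hg : constantCoeff g = 0) :
    d⁄dX R (pscomp Φ g) = pscomp (d⁄dX R Φ) g * d⁄dX R g := by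
  rw [pscomp_eq_subst _ hg, pscomp_eq_subst _ hg,
    derivative_subst (HasSubst.of_constantCoeff_zero' hg)]

theorem X_mul_derivative_mul_one_sub_eq_of_eq_X_mul_pscomp {Φ F : R⟦X⟧}
    (hF0 : constantCoeff F = 0) (hF : F = X * pscomp Φ F) :
    X * d⁄dX R F * (1 - X * pscomp (d⁄dX R Φ) F) = F := by
  have hdF : d⁄dX R F = pscomp Φ F + X * (pscomp (d⁄dX R Φ) F * d⁄dX R F) := by
    conv_lhs => rw [hF]
    rw [Derivation.leibniz, derivative_pscomp Φ hF0, derivative_X, smul_eq_mul, smul_eq_mul]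
    ring
  linear_combination X * hdF - hF

end CommRing

section DuAtOne

local notation "eval₁" => PowerSeries.map (Polynomial.evalRingHom (1 : ℝ))

@[simp]
theorem coeff_duAtOne (A : (Polynomial ℝ)⟦X⟧) (n : ℕ) :
    coeff n (duAtOne A) = (Polynomial.derivative (coeff n A)).eval 1 :=
  coeff_mk _ _

theorem duAtOne_add (A B : (Polynomial ℝ)⟦X⟧) : duAtOne (A + B) = duAtOne A + duAtOne B := by
  ext n
  simp

theorem duAtOne_sub (A B : (Polynomial ℝ)⟦X⟧) : duAtOne (A - B) = duAtOne A - duAtOne B := by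
  ext n
  simp

theorem duAtOne_mul (A B : (Polynomial ℝ)⟦X⟧) :
    duAtOne (A * B) = duAtOne A * eval₁ B + eval₁ A * duAtOne B := by
  ext n
  simp [coeff_mul, Polynomial.eval_finsetSum, Finset.sum_add_distrib]

theorem duAtOne_C (p : Polynomial ℝ) :
    duAtOne (C p) = C ((Polynomial.derivative p).eval 1) := by
  ext n
  cases n <;> simp [coeff_C]

theorem duAtOne_map_C (φ : ℝ⟦X⟧) : duAtOne (map Polynomial.C φ) = 0 := by
  ext n
  simp [coeff_map]

theorem duAtOne_one : duAtOne 1 = 0 := by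
  simpa using duAtOne_map_C 1

theorem duAtOne_X : duAtOne X = 0 := by
  simpa using duAtOne_map_C X

theorem duAtOne_pow (A : (Polynomial ℝ)⟦X⟧) (k : ℕ) :
    duAtOne (A ^ (k + 1)) = (k + 1 : ℝ) • (eval₁ A ^ k * duAtOne A) := by
  induction k with
  | zero => simp
  | succ k ih =>
    rw [pow_succ, duAtOne_mul, ih, map_pow]
    simp only [smul_eq_C_mul, map_add, map_one, Nat.cast_succ]
    ring

theorem duAtOne_pscomp_map_C (φ : ℝ⟦X⟧) {A : (Polynomial ℝ)⟦X⟧}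
    (hA0 : constantCoeff A = 0) :
    duAtOne (pscomp (map Polynomial.C φ) A) = pscomp (d⁄dX ℝ φ) (eval₁ A) * duAtOne A := by
  have hEA : constantCoeff (eval₁ A) = 0 := by
    rw [← coeff_zero_eq_constantCoeff_apply, coeff_map, coeff_zero_eq_constantCoeff_apply, hA0,
      map_zero]
  ext n
  have hconst : Polynomial.derivative (coeff n (A ^ 0)) = 0 := by
    rw [pow_zero, coeff_one]
    split_ifs <;> simp
  rw [coeff_pscomp_mul _ hEA, coeff_duAtOne, coeff_pscomp_of_le _ hA0 n.le_succ,
    Finset.sum_range_succ', map_add, map_sum]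
  simp only [coeff_map, Polynomial.derivative_mul, Polynomial.derivative_C, zero_mul, zero_add,
    hconst, mul_zero, add_zero, Polynomial.eval_finsetSum, Polynomial.eval_mul, Polynomial.eval_C]
  refine Finset.sum_congr rfl fun j _ => ?_
  rw [← coeff_duAtOne, duAtOne_pow, coeff_smul, coeff_derivative, smul_eq_mul]
  ring

theorem duAtOne_mul_one_sub_eq {φ : ℝ⟦X⟧} {A B : (Polynomial ℝ)⟦X⟧}
    (hA0 : constantCoeff A = 0)
    (hA : C Polynomial.X * A =
      C Polynomial.X * (X * pscomp (map Polynomial.C φ) A) + (C Polynomial.X - 1) * B) :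
    duAtOne A * (1 - X * pscomp (d⁄dX ℝ φ) (eval₁ A)) = eval₁ B := by
  have hEu : eval₁ (C Polynomial.X) = 1 := by simp
  have hDu : duAtOne (C Polynomial.X) = 1 := by simp [duAtOne_C]
  have hEφ : eval₁ (map Polynomial.C φ) = φ := by
    ext n
    simp [coeff_map]
  have hAtOne := congrArg eval₁ hA
  simp only [map_add, map_mul, map_sub, map_one, map_X, map_pscomp, hEu, hEφ, one_mul, sub_self,
    zero_mul, add_zero] at hAtOne
  have hDiff := congrArg duAtOne hA
  simp only [duAtOne_add, duAtOne_mul, duAtOne_sub, duAtOne_one, duAtOne_X,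
    duAtOne_pscomp_map_C φ hA0, map_mul, map_sub, map_one, map_X, map_pscomp, hEu, hDu,
    hEφ] at hDiff
  linear_combination hDiff - hAtOne

end DuAtOne

theorem du_gfBiv_at_one_eq_general (wseq : ℕ → ℝ)
    (Φ F Fr : PowerSeries ℝ) (hΦ : Φ = PowerSeries.mk wseq)
    (hF0 : PowerSeries.constantCoeff F = 0)
    (hF : F = PowerSeries.X * pscomp Φ F)
    (A : PowerSeries (Polynomial ℝ))
    (hA0 : PowerSeries.constantCoeff A = 0)
    (hAu1 : PowerSeries.map (Polynomial.evalRingHom (1 : ℝ)) A = F)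
    (hA : PowerSeries.C (Polynomial.X : Polynomial ℝ) * A =
      PowerSeries.C (Polynomial.X : Polynomial ℝ) *
        (PowerSeries.X * pscomp (PowerSeries.mk fun k => Polynomial.C (wseq k)) A) +
      (PowerSeries.C (Polynomial.X : Polynomial ℝ) - 1) *
        (PowerSeries.mk fun n => Polynomial.C (PowerSeries.coeff n Fr) * Polynomial.X ^ n)) :
    duAtOne A * F =
      PowerSeries.X * PowerSeries.derivativeFun F * Fr := by
  have hΨ : (PowerSeries.mk fun k => Polynomial.C (wseq k)) = map Polynomial.C Φ := by
    ext k
    simp [hΦ, coeff_map]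
  have hFr : PowerSeries.map (Polynomial.evalRingHom (1 : ℝ))
      (PowerSeries.mk fun n => Polynomial.C (PowerSeries.coeff n Fr) * Polynomial.X ^ n) = Fr := by
    ext n
    simp [coeff_map]
  have hG := duAtOne_mul_one_sub_eq hA0 (hΨ ▸ hA)
  rw [hAu1, hFr] at hG
  calc duAtOne A * F
      = duAtOne A * (X * d⁄dX ℝ F * (1 - X * pscomp (d⁄dX ℝ Φ) F)) := by
        rw [X_mul_derivative_mul_one_sub_eq_of_eq_X_mul_pscomp hF0 hF]
    _ = X * d⁄dX ℝ F * Fr := by rw [← hG]; ring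

/-- Under the same assumptions as before (`F(x) = x·Φ(F(x))` with `Φ(0) = 1`, and
`A_r` satisfying the bivariate functional equation), the derivative
`∂A_r/∂u |_{u=1}` equals `x·F'(x)·F_r(x)/F(x)`; since `F(x)` has zero constant term,
this quotient identity is stated in the multiplied form
`(∂A_r/∂u |_{u=1})·F(x) = x·F'(x)·F_r(x)`. -/
theorem du_gfBiv_at_one_eq (wseq : ℕ → ℝ) (hw : ∀ k, 0 ≤ wseq k) (hw0 : wseq 0 = 1)
    (Φ F Fr : PowerSeries ℝ) (hΦ : Φ = PowerSeries.mk wseq)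
    (hF0 : PowerSeries.constantCoeff F = 0)
    (hFr0 : PowerSeries.constantCoeff Fr = 0)
    (hF : F = PowerSeries.X * pscomp Φ F)
    (A : PowerSeries (Polynomial ℝ))
    (hA0 : PowerSeries.constantCoeff A = 0)
    (hAu1 : PowerSeries.map (Polynomial.evalRingHom (1 : ℝ)) A = F)
    (hA : PowerSeries.C (Polynomial.X : Polynomial ℝ) * A =
      PowerSeries.C (Polynomial.X : Polynomial ℝ) *
        (PowerSeries.X * pscomp (PowerSeries.mk fun k => Polynomial.C (wseq k)) A) +
      (PowerSeries.C (Polynomial.X : Polynomial ℝ) - 1) *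
        (PowerSeries.mk fun n => Polynomial.C (PowerSeries.coeff n Fr) * Polynomial.X ^ n)) :
    duAtOne A * F =
      PowerSeries.X * PowerSeries.derivativeFun F * Fr :=
  du_gfBiv_at_one_eq_general wseq Φ F Fr hΦ hF0 hF A hA0 hAu1 hA
end

section
/- Let c_r be as above with τ − c_r ~ 2/(ρΦ''(τ) r), and define d_1 = 1, d_r = ρ·Φ'(c_{r-1})·d_{r-1} + c_r/ρ for r > 1. Then d_r is increasing, d_r = O(r), and moreover d_r ~ (τ/(3ρ))·r as r → ∞. -/
/-!
Write `d (r + 1) = a r * d r + b r` with `a r = ρ Φ'(c r)` and `b r = c (r + 1) / ρ`.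
As `c` increases to `τ` inside `[0, τ]`, where `Φ` and `Φ'` are monotone, `0 ≤ a r ≤ 1` and
`b r ≤ τ / ρ` both increase, which gives monotonicity of `d` and `d r ≤ (1 + τ / ρ) r`.
Since `ρ Φ'(τ) = 1`, we get `1 - a r = ρ (Φ'(τ) - Φ'(c r)) ~ ρ Φ''(τ) (τ - c r) ~ 2 / r`.
With `β = τ / ρ = lim b r`, the deviation `y r = d r / r - β / 3` then satisfies
`(r + 1) y (r + 1) = a r * r * y r + o(1)` with `a r * r ≤ r - 1` eventually: it contracts by
the factor `(r - 1) / (r + 1)` per step, up to `o(1 / r)`, and so tends to `0`.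
-/

open Filter Topology Set Asymptotics

section PowerSeries

variable {a : ℕ → ℝ} (ha : ∀ k, 0 ≤ a k)
include ha

theorem summable_mul_pow_of_mem_Icc (n : ℕ → ℕ) {s t : ℝ} (ht : t ∈ Icc 0 s)
    (hs : Summable fun k => a k * s ^ n k) : Summable fun k => a k * t ^ n k :=
  hs.of_nonneg_of_le (fun k => mul_nonneg (ha k) (pow_nonneg ht.1 _))
    fun k => mul_le_mul_of_nonneg_left (pow_le_pow_left₀ ht.1 ht.2 _) (ha k)

theorem monotoneOn_tsum_mul_pow (n : ℕ → ℕ) {s : ℝ} (hs : Summable fun k => a k * s ^ n k) :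
    MonotoneOn (fun t => ∑' k, a k * t ^ n k) (Icc 0 s) := fun _ hx _ hy hxy =>
  Summable.tsum_le_tsum (fun k => mul_le_mul_of_nonneg_left (pow_le_pow_left₀ hx.1 hxy _) (ha k))
    (summable_mul_pow_of_mem_Icc ha n hx hs) (summable_mul_pow_of_mem_Icc ha n hy hs)

theorem summable_pow_mul_mul_pow_sub (m : ℕ) {s t : ℝ} (ht : 0 < t) (hts : t < s)
    (hs : Summable fun k => a k * s ^ k) :
    Summable fun k : ℕ => (k : ℝ) ^ m * a k * t ^ (k - m) := by
  have hs0 : 0 < s := ht.trans hts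
  have hq : |t / s| < 1 := by
    rw [abs_of_pos (div_pos ht hs0)]; exact (div_lt_one hs0).2 hts
  obtain ⟨C, hC⟩ := (tendsto_pow_const_mul_const_pow_of_abs_lt_one m hq).bddAbove_range
  refine (summable_nat_add_iff m).mp <|
    ((summable_nat_add_iff m).mpr hs |>.mul_left (C / t ^ m)).of_nonneg_of_le
      (fun k => by have := ha (k + m); positivity) fun k => ?_
  have hk : ((k + m : ℕ) : ℝ) ^ m * (t / s) ^ (k + m) ≤ C := hC ⟨k + m, rfl⟩
  have hsplit : ((k + m : ℕ) : ℝ) ^ m * t ^ k =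
      ((k + m : ℕ) : ℝ) ^ m * (t / s) ^ (k + m) * s ^ (k + m) / t ^ m := by
    rw [div_pow, pow_add t]; field_simp
  calc ((k + m : ℕ) : ℝ) ^ m * a (k + m) * t ^ (k + m - m)
      = a (k + m) * (((k + m : ℕ) : ℝ) ^ m * t ^ k) := by rw [Nat.add_sub_cancel]; ring
    _ ≤ a (k + m) * (C * s ^ (k + m) / t ^ m) := by
      rw [hsplit]; gcongr; exact ha _
    _ = C / t ^ m * (a (k + m) * s ^ (k + m)) := by ring

theorem hasDerivAt_tsum_natCast_mul_pow_pred {s t : ℝ} (ht : |t| < s)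
    (hs : Summable fun k => a k * s ^ k) :
    HasDerivAt (fun x => ∑' k : ℕ, (k : ℝ) * a k * x ^ (k - 1))
      (∑' k : ℕ, (k : ℝ) * ((k : ℝ) - 1) * a k * t ^ (k - 2)) t := by
  obtain ⟨u, htu, hus⟩ := exists_between ht
  have hu0 : 0 < u := (abs_nonneg t).trans_lt htu
  refine hasDerivAt_tsum_of_isPreconnected (summable_pow_mul_mul_pow_sub ha 2 hu0 hus hs)
    (g := fun (k : ℕ) x => (k : ℝ) * a k * x ^ (k - 1))
    (g' := fun (k : ℕ) x => (k : ℝ) * ((k : ℝ) - 1) * a k * x ^ (k - 2))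
    isOpen_Ioo (convex_Ioo _ _).isPreconnected (fun k y _ => ?_) (fun k y hy => ?_)
    (y₀ := u / 2) ⟨by linarith, by linarith⟩ ?_ (abs_lt.1 htu)
  · refine ((hasDerivAt_pow (k - 1) y).const_mul ((k : ℝ) * a k)).congr_deriv ?_
    rcases k with _ | k
    · simp
    · simp only [Nat.cast_add, Nat.cast_one, add_tsub_cancel_right, Nat.reduceSubDiff]
      ring
  · have hk : |(k : ℝ) * ((k : ℝ) - 1)| ≤ (k : ℝ) ^ 2 := by
      rcases k with _ | k
      · simp
      · push_cast
        rw [add_sub_cancel_right, abs_of_nonneg (by positivity)]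
        nlinarith
    have hyu : |y| ≤ u := abs_le.2 ⟨hy.1.le, hy.2.le⟩
    have := ha k
    rw [Real.norm_eq_abs, abs_mul, abs_mul, abs_pow, abs_of_nonneg this]
    gcongr
  · simpa using summable_pow_mul_mul_pow_sub ha 1 (half_pos hu0) (by linarith) hs

end PowerSeries

theorem tendsto_natCast_mul_sub_of_hasDerivAt {f : ℝ → ℝ} {f' x ℓ : ℝ} {u : ℕ → ℝ}
    (hf : HasDerivAt f f' x) (hu : Tendsto u atTop (𝓝 x))
    (hℓ : Tendsto (fun r : ℕ => (r : ℝ) * (x - u r)) atTop (𝓝 ℓ)) :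
    Tendsto (fun r : ℕ => (r : ℝ) * (f x - f (u r))) atTop (𝓝 (f' * ℓ)) := by
  have hlin : (fun r : ℕ => (f (u r) - f x - (u r - x) * f') * r) =o[atTop]
      fun r => (u r - x) * r :=
    ((hasDerivAt_iff_isLittleO.1 hf).comp_tendsto hu).mul_isBigO (isBigO_refl _ _)
  have hbdd : (fun r : ℕ => (u r - x) * r) =O[atTop] fun _ => (1 : ℝ) :=
    (hℓ.neg.congr fun r => by ring).isBigO_one ℝ
  have hrem := (isLittleO_one_iff ℝ).1 (hlin.trans_isBigO hbdd)
  simpa using (hℓ.const_mul f').sub hrem |>.congr fun r => by ring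

theorem tendsto_zero_of_succ_mul_abs_le {y e : ℕ → ℝ} (he : Tendsto e atTop (𝓝 0))
    (h : ∀ᶠ r : ℕ in atTop, ((r : ℝ) + 1) * |y (r + 1)| ≤ ((r : ℝ) - 1) * |y r| + |e r|) :
    Tendsto y atTop (𝓝 0) := by
  rw [Metric.tendsto_nhds]
  intro ε hε
  have he' : ∀ᶠ r : ℕ in atTop, |e r| < ε := by
    simpa only [Real.dist_eq, sub_zero] using Metric.tendsto_nhds.1 he ε hε
  obtain ⟨N, hN⟩ := eventually_atTop.1 (h.and (he'.and (eventually_ge_atTop 2)))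
  set B := ((N : ℝ) - 1) * N * |y N|
  -- `(r - 1) r |y r|` grows by at most `r |e r| ≤ r ε` per step
  have hgrowth : ∀ r ≥ N, ((r : ℝ) - 1) * r * |y r| ≤ B + ε * (((r : ℝ) - 1) * r / 2) := by
    intro r hr
    induction r, hr using Nat.le_induction with
    | base =>
      have : (2 : ℝ) ≤ N := by exact_mod_cast (hN N le_rfl).2.2
      exact le_add_of_nonneg_right (mul_nonneg hε.le (by nlinarith))
    | succ r hr ih =>
      obtain ⟨hstep, her, hr2⟩ := hN r hr
      have hr0 : (0 : ℝ) ≤ r := r.cast_nonneg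
      push_cast
      calc ((r : ℝ) + 1 - 1) * (r + 1) * |y (r + 1)| = r * ((r + 1) * |y (r + 1)|) := by ring
        _ ≤ r * (((r : ℝ) - 1) * |y r| + ε) := by gcongr; linarith
        _ ≤ B + ε * (((r : ℝ) + 1 - 1) * (r + 1) / 2) := by nlinarith
  have hsq : Tendsto (fun r : ℕ => ((r : ℝ) - 1) * r) atTop atTop :=
    (tendsto_atTop_add_const_right atTop (-1) tendsto_natCast_atTop_atTop).atTop_mul_atTop₀
      tendsto_natCast_atTop_atTop
  filter_upwards [(tendsto_const_nhds (x := B)).div_atTop hsq |>.eventually_lt_const (half_pos hε),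
    eventually_ge_atTop N] with r hB hr
  have hpos : (0 : ℝ) < ((r : ℝ) - 1) * r := by
    have : (2 : ℝ) ≤ r := by exact_mod_cast (hN r hr).2.2
    nlinarith
  have : |y r| ≤ B / (((r : ℝ) - 1) * r) + ε / 2 := by
    rw [div_add' _ _ _ hpos.ne', le_div_iff₀ hpos]
    linarith [hgrowth r hr]
  rw [Real.dist_eq, sub_zero]
  linarith

theorem mem_and_le_succ_of_monotoneOn {α : Type*} [Preorder α] {f : α → α} {s : Set α}
    (hf : MonotoneOn f s) (hfs : MapsTo f s s) {c : ℕ → α}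
    (hc : ∀ r, 1 ≤ r → c (r + 1) = f (c r)) (hc1 : c 1 ∈ s) (hc12 : c 1 ≤ c 2) :
    ∀ r, 1 ≤ r → c r ∈ s ∧ c r ≤ c (r + 1) := by
  intro r hr
  induction r, hr using Nat.le_induction with
  | base => exact ⟨hc1, hc12⟩
  | succ r hr ih =>
    have hmem : c (r + 1) ∈ s := hc r hr ▸ hfs ih.1
    refine ⟨hmem, ?_⟩
    rw [hc r hr, hc (r + 1) (by omega)]
    exact hf ih.1 hmem ih.2

theorem mem_Icc_and_le_succ_of_rec {Φ : ℝ → ℝ} {ρ τ : ℝ} {c : ℕ → ℝ}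
    (hΦ : MonotoneOn Φ (Icc 0 τ)) (hΦ0 : Φ 0 = 1) (hτ : 0 ≤ τ) (hρ : 0 < ρ)
    (hfix : ρ * Φ τ = τ) (hc1 : c 1 = ρ) (hcrec : ∀ r, 1 ≤ r → c (r + 1) = ρ * Φ (c r)) :
    ∀ r, 1 ≤ r → c r ∈ Icc 0 τ ∧ c r ≤ c (r + 1) := by
  have hΦ1 : ∀ t ∈ Icc 0 τ, 1 ≤ Φ t := fun t ht => hΦ0 ▸ hΦ (left_mem_Icc.2 hτ) ht ht.1
  have hρτ : ρ ∈ Icc 0 τ :=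
    ⟨hρ.le, hfix ▸ le_mul_of_one_le_right hρ.le (hΦ1 τ (right_mem_Icc.2 hτ))⟩
  refine mem_and_le_succ_of_monotoneOn (f := fun x => ρ * Φ x)
    (fun x hx y hy hxy => mul_le_mul_of_nonneg_left (hΦ hx hy hxy) hρ.le)
    (fun x hx => ⟨by have := hΦ1 x hx; positivity,
      hfix ▸ mul_le_mul_of_nonneg_left (hΦ hx (right_mem_Icc.2 hτ) hx.2) hρ.le⟩)
    hcrec (hc1 ▸ hρτ) ?_
  rw [hcrec 1 le_rfl, hc1]
  exact le_mul_of_one_le_right hρ.le (hΦ1 ρ hρτ)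

section AffineRecursion

variable {a b d : ℕ → ℝ} (hrec : ∀ r, 1 ≤ r → d (r + 1) = a r * d r + b r)
include hrec

theorem nonneg_of_affine_rec (ha : ∀ r, 1 ≤ r → 0 ≤ a r) (hb : ∀ r, 1 ≤ r → 0 ≤ b r)
    (hd1 : 0 ≤ d 1) : ∀ r, 1 ≤ r → 0 ≤ d r := by
  intro r hr
  induction r, hr using Nat.le_induction with
  | base => exact hd1
  | succ r hr ih => rw [hrec r hr]; exact add_nonneg (mul_nonneg (ha r hr) ih) (hb r hr)

theorem le_succ_of_affine_rec (ha : ∀ r, 1 ≤ r → 0 ≤ a r) (hd : ∀ r, 1 ≤ r → 0 ≤ d r)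
    (ha_mono : ∀ r, 1 ≤ r → a r ≤ a (r + 1)) (hb_mono : ∀ r, 1 ≤ r → b r ≤ b (r + 1))
    (hd12 : d 1 ≤ d 2) : ∀ r, 1 ≤ r → d r ≤ d (r + 1) := by
  intro r hr
  induction r, hr using Nat.le_induction with
  | base => exact hd12
  | succ r hr ih =>
    rw [hrec r hr, hrec (r + 1) (by omega)]
    have := mul_le_mul (ha_mono r hr) ih (hd r hr) (ha (r + 1) (by omega))
    linarith [hb_mono r hr]

theorem le_mul_of_affine_rec {B : ℝ} (hB : 0 ≤ B) (hd : ∀ r, 1 ≤ r → 0 ≤ d r)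
    (ha : ∀ r, 1 ≤ r → a r ≤ 1) (hb : ∀ r, 1 ≤ r → b r ≤ B) : ∀ r, 1 ≤ r → d r ≤ (d 1 + B) * r := by
  intro r hr
  induction r, hr using Nat.le_induction with
  | base => simpa using hB
  | succ r hr ih =>
    rw [hrec r hr]
    have := mul_le_mul_of_nonneg_right (ha r hr) (hd r hr)
    have := hb r hr
    have := hd 1 le_rfl
    push_cast
    nlinarith

theorem tendsto_div_of_affine_rec {β : ℝ} (ha : ∀ r, 1 ≤ r → 0 ≤ a r)
    (ha2 : Tendsto (fun r : ℕ => (r : ℝ) * (1 - a r)) atTop (𝓝 2))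
    (hb : Tendsto b atTop (𝓝 β)) : Tendsto (fun r : ℕ => d r / r) atTop (𝓝 (β / 3)) := by
  set e : ℕ → ℝ := fun r => b r - (1 + r * (1 - a r)) * (β / 3)
  have he : Tendsto e atTop (𝓝 0) := by
    have := hb.sub (((tendsto_const_nhds (x := (1 : ℝ))).add ha2).mul_const (β / 3))
    rwa [show β - (1 + 2) * (β / 3) = 0 by ring] at this
  have hstep : ∀ r : ℕ, 1 ≤ r → ((r : ℝ) + 1) * (d (r + 1) / (r + 1 : ℕ) - β / 3) =
      a r * r * (d r / r - β / 3) + e r := by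
    intro r hr
    have : (r : ℝ) ≠ 0 := by positivity
    rw [hrec r hr]
    push_cast
    field_simp
    ring
  have hy : Tendsto (fun r : ℕ => d r / r - β / 3) atTop (𝓝 0) := by
    refine tendsto_zero_of_succ_mul_abs_le he ?_
    filter_upwards [ha2.eventually_const_lt one_lt_two, eventually_ge_atTop 1] with r h1 hr
    have har : a r * r ≤ r - 1 := by linarith
    rw [← abs_of_pos (by positivity : (0 : ℝ) < r + 1), ← abs_mul, hstep r hr]
    calc |a r * r * (d r / r - β / 3) + e r| ≤ a r * r * |d r / r - β / 3| + |e r| := by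
          have : 0 ≤ a r * r := mul_nonneg (ha r hr) r.cast_nonneg
          exact (abs_add_le _ _).trans_eq (by rw [abs_mul, abs_of_nonneg this])
      _ ≤ (r - 1) * |d r / r - β / 3| + |e r| := by gcongr
  simpa using hy.add_const (β / 3)

end AffineRecursion

theorem d_seq_asymptotics_of_monotoneOn {Φ Φd : ℝ → ℝ} {Φdd ρ τ : ℝ} {c d : ℕ → ℝ}
    (hΦ : MonotoneOn Φ (Icc 0 τ)) (hΦ0 : Φ 0 = 1) (hΦd : MonotoneOn Φd (Icc 0 τ))
    (hΦd0 : 0 ≤ Φd 0) (hderiv : HasDerivAt Φd Φdd τ) (hΦdd : Φdd ≠ 0) (hτ : 0 ≤ τ)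
    (hρ : 0 < ρ) (hfix : ρ * Φ τ = τ) (hρΦd : ρ * Φd τ = 1)
    (hc1 : c 1 = ρ) (hcrec : ∀ r, 1 ≤ r → c (r + 1) = ρ * Φ (c r))
    (hlim : Tendsto c atTop (𝓝 τ))
    (hcasym : Tendsto (fun r : ℕ => (r : ℝ) * (τ - c r)) atTop (𝓝 (2 / (ρ * Φdd))))
    (hd1 : d 1 = 1) (hdrec : ∀ r, 1 ≤ r → d (r + 1) = ρ * Φd (c r) * d r + c (r + 1) / ρ) :
    (∀ r, 1 ≤ r → d r ≤ d (r + 1)) ∧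
      (∃ C : ℝ, ∀ r, 1 ≤ r → d r ≤ C * r) ∧
      Tendsto (fun r : ℕ => d r / r) atTop (𝓝 (τ / (3 * ρ))) := by
  have hc := mem_Icc_and_le_succ_of_rec hΦ hΦ0 hτ hρ hfix hc1 hcrec
  have ha0 : ∀ r, 1 ≤ r → 0 ≤ ρ * Φd (c r) := fun r hr =>
    mul_nonneg hρ.le (hΦd0.trans (hΦd (left_mem_Icc.2 hτ) (hc r hr).1 (hc r hr).1.1))
  have hb0 : ∀ r, 1 ≤ r → 0 ≤ c (r + 1) / ρ := fun r hr =>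
    div_nonneg (hc (r + 1) (by omega)).1.1 hρ.le
  have hd0 := nonneg_of_affine_rec hdrec ha0 hb0 (hd1 ▸ zero_le_one)
  have ha1 : ∀ r, 1 ≤ r → ρ * Φd (c r) ≤ 1 := fun r hr =>
    hρΦd ▸ mul_le_mul_of_nonneg_left (hΦd (hc r hr).1 (right_mem_Icc.2 hτ) (hc r hr).1.2) hρ.le
  have ha_mono : ∀ r, 1 ≤ r → ρ * Φd (c r) ≤ ρ * Φd (c (r + 1)) := fun r hr =>
    mul_le_mul_of_nonneg_left (hΦd (hc r hr).1 (hc (r + 1) (by omega)).1 (hc r hr).2) hρ.le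
  have hb_mono : ∀ r, 1 ≤ r → c (r + 1) / ρ ≤ c (r + 1 + 1) / ρ := fun r hr =>
    div_le_div_of_nonneg_right (hc (r + 1) (by omega)).2 hρ.le
  have hb_le : ∀ r, 1 ≤ r → c (r + 1) / ρ ≤ τ / ρ := fun r hr =>
    div_le_div_of_nonneg_right (hc (r + 1) (by omega)).1.2 hρ.le
  have hd12 : d 1 ≤ d 2 := by
    have hρτ : ρ ∈ Icc 0 τ := hc1 ▸ (hc 1 le_rfl).1
    have hΦρ : 1 ≤ Φ ρ := hΦ0 ▸ hΦ (left_mem_Icc.2 hτ) hρτ hρ.le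
    rw [hdrec 1 le_rfl, hd1, hcrec 1 le_rfl, hc1, mul_div_cancel_left₀ _ hρ.ne']
    linarith [hc1 ▸ ha0 1 le_rfl]
  have ha2 : Tendsto (fun r : ℕ => (r : ℝ) * (1 - ρ * Φd (c r))) atTop (𝓝 2) := by
    have := (tendsto_natCast_mul_sub_of_hasDerivAt hderiv hlim hcasym).const_mul ρ
    rw [show ρ * (Φdd * (2 / (ρ * Φdd))) = 2 by field_simp] at this
    exact this.congr fun r => by rw [← hρΦd]; ring
  refine ⟨le_succ_of_affine_rec hdrec ha0 hd0 ha_mono hb_mono hd12, ⟨1 + τ / ρ, ?_⟩, ?_⟩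
  · simpa only [hd1] using le_mul_of_affine_rec hdrec (by positivity) hd0 ha1 hb_le
  · have := tendsto_div_of_affine_rec hdrec ha0 ha2
      ((hlim.comp (tendsto_add_atTop_nat 1)).div_const ρ)
    rwa [div_div, mul_comm] at this

theorem d_seq_asymptotics_general (w : ℕ → ℝ) (hw : ∀ k, 0 ≤ w k) (hw0 : w 0 = 1)
    (τ : ℝ) (hτ : 0 < τ)
    (hrad : ∃ s, τ < s ∧ Summable fun k => w k * s ^ k)
    (Φ Φd : ℝ → ℝ) (Φdd : ℝ)
    (hΦ : ∀ t, Φ t = ∑' k : ℕ, w k * t ^ k)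
    (hΦd : ∀ t, Φd t = ∑' k : ℕ, (k : ℝ) * w k * t ^ (k - 1))
    (hΦdd : Φdd = ∑' k : ℕ, (k : ℝ) * ((k : ℝ) - 1) * w k * τ ^ (k - 2))
    (ρ : ℝ) (hρ : ρ = τ / Φ τ) (hρΦd : ρ * Φd τ = 1) (hΦddpos : 0 < Φdd)
    (c : ℕ → ℝ) (hc1 : c 1 = ρ) (hcrec : ∀ r, 1 ≤ r → c (r + 1) = ρ * Φ (c r))
    (hlim : Tendsto c atTop (𝓝 τ))
    (hcasym : Tendsto (fun r : ℕ => (r : ℝ) * (τ - c r)) atTop (𝓝 (2 / (ρ * Φdd))))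
    (d : ℕ → ℝ) (hd1 : d 1 = 1)
    (hdrec : ∀ r, 1 ≤ r → d (r + 1) = ρ * Φd (c r) * d r + c (r + 1) / ρ) :
    (∀ r, 1 ≤ r → d r ≤ d (r + 1)) ∧
      (∃ C : ℝ, ∀ r, 1 ≤ r → d r ≤ C * r) ∧
      Tendsto (fun r : ℕ => d r / r) atTop (𝓝 (τ / (3 * ρ))) := by
  obtain ⟨s, hτs, hs⟩ := hrad
  have hΦ_eq : Φ = fun t => ∑' k, w k * t ^ k := funext hΦ
  have hΦd_eq : Φd = fun t => ∑' k : ℕ, (k : ℝ) * w k * t ^ (k - 1) := funext hΦd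
  have hΦ_mono : MonotoneOn Φ (Icc 0 τ) := hΦ_eq ▸ monotoneOn_tsum_mul_pow hw (fun k => k)
    (summable_mul_pow_of_mem_Icc hw (fun k => k) ⟨hτ.le, hτs.le⟩ hs)
  have hΦd_mono : MonotoneOn Φd (Icc 0 τ) :=
    hΦd_eq ▸ monotoneOn_tsum_mul_pow (fun k => mul_nonneg k.cast_nonneg (hw k)) (fun k => k - 1)
      (by simpa using summable_pow_mul_mul_pow_sub hw 1 hτ hτs hs)
  have hΦ0 : Φ 0 = 1 := by
    rw [hΦ, tsum_eq_single 0 fun k hk => by simp [hk]]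
    simp [hw0]
  have hΦτ : 1 ≤ Φ τ := hΦ0 ▸ hΦ_mono (left_mem_Icc.2 hτ.le) (right_mem_Icc.2 hτ.le) hτ.le
  refine d_seq_asymptotics_of_monotoneOn hΦ_mono hΦ0 hΦd_mono ?_ ?_ hΦddpos.ne' hτ.le
    (hρ ▸ div_pos hτ (by linarith)) (by rw [hρ]; field_simp) hρΦd hc1 hcrec hlim hcasym hd1 hdrec
  · rw [hΦd]
    exact tsum_nonneg fun k => mul_nonneg (mul_nonneg k.cast_nonneg (hw k)) (pow_nonneg le_rfl _)
  · rw [hΦd_eq, hΦdd]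
    exact hasDerivAt_tsum_natCast_mul_pow_pred hw (by rwa [abs_of_pos hτ]) hs

/-- With `c_r` as before (`τ − c_r ~ 2/(ρΦ''(τ)·r)`) and `d_1 = 1`,
`d_r = ρ·Φ'(c_{r-1})·d_{r-1} + c_r/ρ` for `r > 1`, the sequence `d_r` is increasing,
`d_r = O(r)`, and moreover `d_r ~ (τ/(3ρ))·r` as `r → ∞`. -/
theorem d_seq_asymptotics (w : ℕ → ℝ) (hw : ∀ k, 0 ≤ w k) (hw0 : w 0 = 1)
    (hwk : ∃ k, 1 < k ∧ 0 < w k)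
    (τ : ℝ) (hτ : 0 < τ)
    (hrad : ∃ s, τ < s ∧ Summable fun k => w k * s ^ k)
    (Φ Φd : ℝ → ℝ) (Φdd : ℝ)
    (hΦ : ∀ t, Φ t = ∑' k : ℕ, w k * t ^ k)
    (hΦd : ∀ t, Φd t = ∑' k : ℕ, (k : ℝ) * w k * t ^ (k - 1))
    (hΦdd : Φdd = ∑' k : ℕ, (k : ℝ) * ((k : ℝ) - 1) * w k * τ ^ (k - 2))
    (hcrit : Φ τ = τ * Φd τ)
    (ρ : ℝ) (hρ : ρ = τ / Φ τ) (hρΦd : ρ * Φd τ = 1) (hΦddpos : 0 < Φdd)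
    (c : ℕ → ℝ) (hc1 : c 1 = ρ) (hcrec : ∀ r, 1 ≤ r → c (r + 1) = ρ * Φ (c r))
    (hlim : Tendsto c atTop (𝓝 τ))
    (hcasym : Tendsto (fun r : ℕ => (r : ℝ) * (τ - c r)) atTop (𝓝 (2 / (ρ * Φdd))))
    (d : ℕ → ℝ) (hd1 : d 1 = 1)
    (hdrec : ∀ r, 1 ≤ r → d (r + 1) = ρ * Φd (c r) * d r + c (r + 1) / ρ) :
    (∀ r, 1 ≤ r → d r ≤ d (r + 1)) ∧
      (∃ C : ℝ, ∀ r, 1 ≤ r → d r ≤ C * r) ∧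
      Tendsto (fun r : ℕ => d r / r) atTop (𝓝 (τ / (3 * ρ))) :=
  d_seq_asymptotics_general w hw hw0 τ hτ hrad Φ Φd Φdd hΦ hΦd hΦdd ρ hρ hρΦd hΦddpos c hc1 hcrec
    hlim hcasym d hd1 hdrec
end

section
/- Let σ_r² = (4ρτ³d_r − 4ρτ²c_r d_r + (2τ² − α²)c_r² − 2τ³c_r)/(2τ⁴) with α² = 2τ/(ρΦ''(τ)), where c_r, d_r are as above (c_r → τ with τ − c_r ~ 2/(ρΦ''(τ)r), and d_r ~ τr/(3ρ)). Then σ_r² → 1/(3ρτΦ''(τ)) as r → ∞; in particular σ_r² > 0 for all sufficiently large r. -/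
open Filter Topology

/-! Writing `4ρτ³d_r − 4ρτ²c_r d_r = 4ρτ²·(τ − c_r)d_r`, the product of the two first-order
asymptotics gives `(τ − c_r)d_r → 2τ / (3ρ²Φ''(τ))`. With `c_r → τ` the terms `2τ²c_r²` and
`−2τ³c_r` cancel in the limit, and `−α²τ² = −2τ³ / (ρΦ''(τ))` removes three quarters of
`8τ³ / (3ρΦ''(τ))`, leaving `2τ³ / (3ρΦ''(τ))` over `2τ⁴`. The limit is positive because
`ρ = τ / Φ(τ)` with `Φ(τ) ≥ w₀ = 1`. -/

lemma summable_mul_pow_of_le {w : ℕ → ℝ} (hw : ∀ k, 0 ≤ w k) {t s : ℝ} (ht : 0 ≤ t)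
    (hts : t ≤ s) (hs : Summable fun k => w k * s ^ k) : Summable fun k => w k * t ^ k :=
  hs.of_nonneg_of_le (fun k => mul_nonneg (hw k) (pow_nonneg ht k))
    fun k => mul_le_mul_of_nonneg_left (pow_le_pow_left₀ ht hts k) (hw k)

lemma one_le_tsum_mul_pow {w : ℕ → ℝ} (hw : ∀ k, 0 ≤ w k) (hw0 : w 0 = 1) {t : ℝ} (ht : 0 ≤ t)
    (hsum : Summable fun k => w k * t ^ k) : 1 ≤ ∑' k, w k * t ^ k := by
  simpa [hw0] using hsum.le_tsum 0 fun k _ => mul_nonneg (hw k) (pow_nonneg ht k)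

lemma tendsto_mul_of_natCast_mul_of_div_natCast {u v : ℕ → ℝ} {a b : ℝ}
    (hu : Tendsto (fun r : ℕ => (r : ℝ) * u r) atTop (𝓝 a))
    (hv : Tendsto (fun r : ℕ => v r / r) atTop (𝓝 b)) :
    Tendsto (fun r => u r * v r) atTop (𝓝 (a * b)) := by
  refine (hu.mul hv).congr' ?_
  filter_upwards [eventually_ne_atTop 0] with r hr
  have hr' : (r : ℝ) ≠ 0 := Nat.cast_ne_zero.mpr hr
  field_simp

theorem sigma_sq_limit_general (w : ℕ → ℝ) (hw : ∀ k, 0 ≤ w k) (hw0 : w 0 = 1)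
    (τ : ℝ) (hτ : 0 < τ)
    (hrad : ∃ s, τ < s ∧ Summable fun k => w k * s ^ k)
    (Φ : ℝ → ℝ) (Φdd : ℝ)
    (hΦ : ∀ t, Φ t = ∑' k : ℕ, w k * t ^ k)
    (ρ : ℝ) (hρ : ρ = τ / Φ τ) (hΦddpos : 0 < Φdd)
    (c : ℕ → ℝ)
    (hlim : Tendsto c atTop (𝓝 τ))
    (hcasym : Tendsto (fun r : ℕ => (r : ℝ) * (τ - c r)) atTop (𝓝 (2 / (ρ * Φdd))))
    (d : ℕ → ℝ)
    (hdasym : Tendsto (fun r : ℕ => d r / r) atTop (𝓝 (τ / (3 * ρ))))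
    (α2 : ℝ) (hα2 : α2 = 2 * τ / (ρ * Φdd))
    (σsq : ℕ → ℝ)
    (hσ : ∀ r, σsq r = (4 * ρ * τ ^ 3 * d r - 4 * ρ * τ ^ 2 * c r * d r +
      (2 * τ ^ 2 - α2) * (c r) ^ 2 - 2 * τ ^ 3 * c r) / (2 * τ ^ 4)) :
    Tendsto σsq atTop (𝓝 (1 / (3 * ρ * τ * Φdd))) ∧
      ∃ N : ℕ, ∀ r, N ≤ r → 0 < σsq r := by
  obtain ⟨s, hτs, hs⟩ := hrad
  have hΦτ : 1 ≤ Φ τ :=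
    hΦ τ ▸ one_le_tsum_mul_pow hw hw0 hτ.le (summable_mul_pow_of_le hw hτ.le hτs.le hs)
  have hρpos : 0 < ρ := hρ ▸ div_pos hτ (one_pos.trans_le hΦτ)
  have hσ' : σsq = fun r => (4 * ρ * τ ^ 2 * ((τ - c r) * d r) +
      (2 * τ ^ 2 - α2) * c r ^ 2 - 2 * τ ^ 3 * c r) / (2 * τ ^ 4) := by
    funext r; rw [hσ r]; ring
  have hlimit : (4 * ρ * τ ^ 2 * (2 / (ρ * Φdd) * (τ / (3 * ρ))) +
      (2 * τ ^ 2 - α2) * τ ^ 2 - 2 * τ ^ 3 * τ) / (2 * τ ^ 4) = 1 / (3 * ρ * τ * Φdd) := by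
    rw [hα2]; field_simp; ring
  have hT : Tendsto σsq atTop (𝓝 (1 / (3 * ρ * τ * Φdd))) := by
    rw [hσ', ← hlimit]
    exact ((((tendsto_mul_of_natCast_mul_of_div_natCast hcasym hdasym).const_mul _).add
      ((hlim.pow 2).const_mul _)).sub (hlim.const_mul _)).div_const _
  exact ⟨hT, eventually_atTop.mp (hT.eventually (eventually_gt_nhds (by positivity)))⟩

/-- Let `σ_r² = (4ρτ³d_r − 4ρτ²c_r d_r + (2τ² − α²)c_r² − 2τ³c_r)/(2τ⁴)` with
`α² = 2τ/(ρΦ''(τ))`, where `c_r → τ` with `τ − c_r ~ 2/(ρΦ''(τ)·r)` and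
`d_r ~ τr/(3ρ)` are as in the standard simply generated setup.  Then
`σ_r² → 1/(3ρτΦ''(τ))` as `r → ∞`; in particular `σ_r² > 0` for all sufficiently
large `r`. -/
theorem sigma_sq_limit (w : ℕ → ℝ) (hw : ∀ k, 0 ≤ w k) (hw0 : w 0 = 1)
    (hwk : ∃ k, 1 < k ∧ 0 < w k)
    (τ : ℝ) (hτ : 0 < τ)
    (hrad : ∃ s, τ < s ∧ Summable fun k => w k * s ^ k)
    (Φ Φd : ℝ → ℝ) (Φdd : ℝ)
    (hΦ : ∀ t, Φ t = ∑' k : ℕ, w k * t ^ k)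
    (hΦd : ∀ t, Φd t = ∑' k : ℕ, (k : ℝ) * w k * t ^ (k - 1))
    (hΦdd : Φdd = ∑' k : ℕ, (k : ℝ) * ((k : ℝ) - 1) * w k * τ ^ (k - 2))
    (hcrit : Φ τ = τ * Φd τ)
    (ρ : ℝ) (hρ : ρ = τ / Φ τ) (hΦddpos : 0 < Φdd)
    (c : ℕ → ℝ) (hc1 : c 1 = ρ) (hcrec : ∀ r, 1 ≤ r → c (r + 1) = ρ * Φ (c r))
    (hlim : Tendsto c atTop (𝓝 τ))
    (hcasym : Tendsto (fun r : ℕ => (r : ℝ) * (τ - c r)) atTop (𝓝 (2 / (ρ * Φdd))))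
    (d : ℕ → ℝ) (hd1 : d 1 = 1)
    (hdrec : ∀ r, 1 ≤ r → d (r + 1) = ρ * Φd (c r) * d r + c (r + 1) / ρ)
    (hdasym : Tendsto (fun r : ℕ => d r / r) atTop (𝓝 (τ / (3 * ρ))))
    (α2 : ℝ) (hα2 : α2 = 2 * τ / (ρ * Φdd))
    (σsq : ℕ → ℝ)
    (hσ : ∀ r, σsq r = (4 * ρ * τ ^ 3 * d r - 4 * ρ * τ ^ 2 * c r * d r +
      (2 * τ ^ 2 - α2) * (c r) ^ 2 - 2 * τ ^ 3 * c r) / (2 * τ ^ 4)) :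
    Tendsto σsq atTop (𝓝 (1 / (3 * ρ * τ * Φdd))) ∧
      ∃ N : ℕ, ∀ r, N ≤ r → 0 < σsq r :=
  sigma_sq_limit_general w hw hw0 τ hτ hrad Φ Φdd hΦ ρ hρ hΦddpos c hlim hcasym d hdasym α2 hα2 σsq
    hσ
end
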